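/- Let κ be a regular cardinal with κ^{<κ} = κ. If GMP_{κ⁺⁺}(κ⁺⁺) holds, then the weak Kurepa Hypothesis wKH(κ⁺) fails, i.e., every tree of height κ⁺ and cardinality κ⁺ has at most κ⁺ many cofinal branches. -/

import Mathlib

/-!
Formalization over the ZFC universe `ZFSet`.  We view `H(θ)` as the collection
of ZF-sets whose transitive closure has cardinality `< θ`, and `M ≺ H(θ)` as
elementarity for the first-order language with a single binary relation
(interpreted as membership).  Cardinals and ordinals of the set-theoretic
universe are rendered as `Cardinal.{1}` and `Ordinal.{1}`, matching the
cardinalities and order types of (collections of) elements of `ZFSet : Type 1`.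
-/

open FirstOrder Cardinal

/-- A collection of ZF-sets viewed as a structure in the first-order language
with one binary relation (`FirstOrder.Language.graph`), interpreting the
relation symbol as membership. -/
def memStructure (A : Set ZFSet.{0}) : Language.graph.Structure A where
  funMap := fun f _ => f.elim
  RelMap := fun {n} r => match n, r with
    | 2, .adj => fun x => ((x 0 : ZFSet) ∈ (x 1 : ZFSet))

/-- `φ` is realized by the assignment `v` in the membership structure on `A`. -/
def realizeIn (A : Set ZFSet.{0}) {n : ℕ} (φ : Language.graph.Formula (Fin n))
    (v : Fin n → A) : Prop :=
  letI := memStructure A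
  φ.Realize v

/-- `M ≺ N`: `M` is an elementary submodel of `N` with respect to the
membership relation. -/
def IsElemSubmodel (M N : Set ZFSet.{0}) : Prop :=
  ∃ h : M ⊆ N, ∀ (n : ℕ) (φ : Language.graph.Formula (Fin n)) (v : Fin n → M),
    realizeIn N φ (fun i => Set.inclusion h (v i)) ↔ realizeIn M φ v

/-- `H(θ)`: the collection of ZF-sets whose transitive closure has cardinality
less than `θ`. -/
def HSet (θ : Cardinal.{1}) : Set ZFSet.{0} :=
  { x | #{ y : ZFSet.{0} | Relation.TransGen (· ∈ ·) y x } < θ }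

/-- `d` is `(κ⁺, M)`-approximated: `d ∩ z ∈ M` for every `z ∈ M` with
`z ⊆ M` and `|z| ≤ κ`. -/
def IsApproximated (κ : Cardinal.{1}) (M : Set ZFSet.{0}) (d : ZFSet.{0}) : Prop :=
  ∀ z : ZFSet.{0}, z ∈ M → z.toSet ⊆ M → #↥z.toSet ≤ κ → d ∩ z ∈ M

/-- `d` is `M`-guessed: there is `e ∈ M` with `e ∩ M = d ∩ M`. -/
def IsGuessed (M : Set ZFSet.{0}) (d : ZFSet.{0}) : Prop :=
  ∃ e ∈ M, e.toSet ∩ M = d.toSet ∩ M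

/-- `M` is a `κ⁺`-guessing model (as a submodel of `H(θ)`): an elementary
submodel of `H(θ)` of cardinality `κ⁺`, closed under sequences of length `< κ`,
in which every `(κ⁺, M)`-approximated subset of an element of `M` is
`M`-guessed. -/
structure IsGuessingModel (κ θ : Cardinal.{1}) (M : Set ZFSet.{0}) : Prop where
  elem : IsElemSubmodel M (HSet θ)
  card : #↥M = Order.succ κ
  closed : ∀ z : ZFSet.{0}, z.toSet ⊆ M → #↥z.toSet < κ → z ∈ M
  guess : ∀ x ∈ M, ∀ d : ZFSet.{0}, d ⊆ x → IsApproximated κ M d → IsGuessed M d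

/-- `P_μ(X)`: subsets of `X` of cardinality less than `μ`. -/
def smallSubsets (μ : Cardinal.{1}) (X : Set ZFSet.{0}) : Set (Set ZFSet.{0}) :=
  { Y | Y ⊆ X ∧ #↥Y < μ }

/-- `C` is club in `P_μ(X)`: `⊆`-cofinal and closed under unions of
`⊆`-increasing chains of length less than `μ`. -/
def IsClubIn (μ : Cardinal.{1}) (X : Set ZFSet.{0}) (C : Set (Set ZFSet.{0})) : Prop :=
  C ⊆ smallSubsets μ X ∧
  (∀ a ∈ smallSubsets μ X, ∃ c ∈ C, a ⊆ c) ∧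
  ∀ δ : Ordinal.{1}, 0 < δ → δ.card < μ →
    ∀ f : Ordinal.{1} → Set ZFSet.{0},
      (∀ i < δ, f i ∈ C) → (∀ i j, i ≤ j → j < δ → f i ⊆ f j) →
      (⋃ i ∈ Set.Iio δ, f i) ∈ C

/-- `S` is stationary in `P_μ(X)`: `S` meets every club subset of `P_μ(X)`. -/
def IsStationaryIn (μ : Cardinal.{1}) (X : Set ZFSet.{0}) (S : Set (Set ZFSet.{0})) : Prop :=
  S ⊆ smallSubsets μ X ∧ ∀ C, IsClubIn μ X C → (S ∩ C).Nonempty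

/-- The guessing model principle `GMP_{κ⁺⁺}(θ)`: the set of
`M ∈ P_{κ⁺⁺}(H(θ))` that are `κ⁺`-guessing models is stationary in
`P_{κ⁺⁺}(H(θ))`. -/
def GMP (κ θ : Cardinal.{1}) : Prop :=
  IsStationaryIn (Order.succ (Order.succ κ)) (HSet θ)
    { M | M ∈ smallSubsets (Order.succ (Order.succ κ)) (HSet θ) ∧ IsGuessingModel κ θ M }

/-- A von Neumann ordinal: a transitive ZF-set linearly ordered by
membership. -/
def IsVonNeumannOrdinal (x : ZFSet.{0}) : Prop :=
  (∀ y ∈ x, y ⊆ x) ∧ ∀ y ∈ x, ∀ z ∈ x, y ∈ z ∨ y = z ∨ z ∈ y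

/-- The ordinal coded by a (von Neumann ordinal) ZF-set: the order type of
membership on it. -/
noncomputable def ordOf (x : ZFSet.{0}) : Ordinal.{1} :=
  letI := Classical.dec (IsWellOrder ↥x.toSet fun a b => (a : ZFSet) ∈ (b : ZFSet))
  if h : IsWellOrder ↥x.toSet (fun a b => (a : ZFSet) ∈ (b : ZFSet)) then
    @Ordinal.type ↥x.toSet (fun a b => (a : ZFSet) ∈ (b : ZFSet)) h
  else 0

/-- A tree coded in the ZF universe: a set of nodes together with a set of
(Kuratowski) pairs coding a strict partial order in which the set of
predecessors of every node is well-ordered. -/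
structure ZFTree where
  nodes : ZFSet.{0}
  rel : ZFSet.{0}
  rel_sub : ∀ p ∈ rel, ∃ a ∈ nodes, ∃ b ∈ nodes, p = ZFSet.pair a b
  lt_irrefl : ∀ a, ZFSet.pair a a ∉ rel
  lt_trans : ∀ a b c, ZFSet.pair a b ∈ rel → ZFSet.pair b c ∈ rel → ZFSet.pair a c ∈ rel
  pred_wellOrder : ∀ t ∈ nodes,
    IsWellOrder {s : ZFSet.{0} // ZFSet.pair s t ∈ rel} fun a b => ZFSet.pair a.1 b.1 ∈ rel

namespace ZFTree

/-- The strict order relation of the tree. -/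
def Lt (T : ZFTree) (a b : ZFSet.{0}) : Prop := ZFSet.pair a b ∈ T.rel

/-- The height of a node: the order type of its set of predecessors. -/
noncomputable def nodeHeight (T : ZFTree) (t : ZFSet.{0}) : Ordinal.{1} :=
  letI := Classical.dec (IsWellOrder {s : ZFSet.{0} // T.Lt s t} fun a b => T.Lt a.1 b.1)
  if h : IsWellOrder {s : ZFSet.{0} // T.Lt s t} fun a b => T.Lt a.1 b.1 then
    @Ordinal.type {s : ZFSet.{0} // T.Lt s t} (fun a b => T.Lt a.1 b.1) h
  else 0

/-- The `α`-th level of the tree: nodes of height `α`. -/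
def level (T : ZFTree) (α : Ordinal.{1}) : Set ZFSet.{0} :=
  { t ∈ T.nodes.toSet | T.nodeHeight t = α }

/-- The height of the tree: the least ordinal whose level is empty. -/
noncomputable def height (T : ZFTree) : Ordinal.{1} :=
  sInf { α | T.level α = ∅ }

/-- A cofinal branch: a chain containing nodes of every height below the
height of the tree. -/
def IsCofinalBranch (T : ZFTree) (B : Set ZFSet.{0}) : Prop :=
  B ⊆ T.nodes.toSet ∧
  (∀ a ∈ B, ∀ b ∈ B, a ≠ b → T.Lt a b ∨ T.Lt b a) ∧
  ∀ α < T.height, ∃ b ∈ B, T.nodeHeight b = α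

/-- A `λ`-tree: a tree of height `λ` all of whose levels have cardinality
less than `λ`. -/
def IsLambdaTree (lam : Cardinal.{1}) (T : ZFTree) : Prop :=
  T.height = lam.ord ∧ ∀ α : Ordinal.{1}, #↥(T.level α) < lam

end ZFTree

/-!
Code the nodes of `T` by the elements of a von Neumann ordinal `A` of size `κ⁺`, so that `A`, its
elements, and the codes of the predecessor sets `{s | s <_T t}` all lie in `H(κ⁺⁺)`; by
stationarity some `κ⁺`-guessing model `M` contains all of them. A piece `z ∈ M` of size `≤ κ`
only codes nodes of height below some `γ < κ⁺`, and there a cofinal branch agrees with the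
predecessors of its node of height `γ`. So the code of the branch is approximated, hence guessed
by some `e ∈ M`; as the code is a subset of `A ⊆ M`, `e` determines the branch. This injects the
cofinal branches into `M`, which has size `κ⁺`.
-/

open FirstOrder Language

section Intersection

variable {n k : ℕ}

abbrev memFormula (t₁ t₂ : Language.graph.Term (Fin n ⊕ Fin k)) :
    Language.graph.BoundedFormula (Fin n) k :=
  Relations.boundedFormula₂ adj t₁ t₂

/-- `∀ s, s ∈ w ↔ s ∈ z ∧ s ∈ p` for the free variables `z, p, w`. -/
def isInterFormula : Language.graph.Formula (Fin 3) :=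
  ((memFormula (&0) (Term.var (Sum.inl 2))).iff
    (memFormula (&0) (Term.var (Sum.inl 0)) ⊓ memFormula (&0) (Term.var (Sum.inl 1)))).all

/-- `∃ w, ∀ s, s ∈ w ↔ s ∈ z ∧ s ∈ p` for the free variables `z, p`. -/
def existsInterFormula : Language.graph.Formula (Fin 2) :=
  ((memFormula (&1) (&0)).iff
    (memFormula (&1) (Term.var (Sum.inl 0)) ⊓ memFormula (&1) (Term.var (Sum.inl 1)))).all.ex

lemma realizeIn_isInterFormula (A : Set ZFSet.{0}) (v : Fin 3 → A) :
    realizeIn A isInterFormula v ↔ ∀ s : A,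
      (s : ZFSet) ∈ (v 2 : ZFSet) ↔ (s : ZFSet) ∈ (v 0 : ZFSet) ∧ (s : ZFSet) ∈ (v 1 : ZFSet) := by
  simp only [realizeIn, isInterFormula, Formula.Realize, BoundedFormula.realize_all,
    BoundedFormula.realize_iff, BoundedFormula.realize_inf, BoundedFormula.realize_rel₂,
    Term.realize_var, Sum.elim_inl]
  rfl

lemma realizeIn_existsInterFormula (A : Set ZFSet.{0}) (v : Fin 2 → A) :
    realizeIn A existsInterFormula v ↔ ∃ w : A, ∀ s : A,
      (s : ZFSet) ∈ (w : ZFSet) ↔ (s : ZFSet) ∈ (v 0 : ZFSet) ∧ (s : ZFSet) ∈ (v 1 : ZFSet) := by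
  simp only [realizeIn, existsInterFormula, Formula.Realize, BoundedFormula.realize_ex,
    BoundedFormula.realize_all, BoundedFormula.realize_iff, BoundedFormula.realize_inf,
    BoundedFormula.realize_rel₂, Term.realize_var, Sum.elim_inl]
  rfl

end Intersection

lemma IsElemSubmodel.inter_mem {M N : Set ZFSet.{0}} (hM : IsElemSubmodel M N)
    (hN_trans : ∀ x ∈ N, ∀ y ∈ x, y ∈ N) (hN_inter : ∀ x ∈ N, ∀ y ∈ N, x ∩ y ∈ N)
    {z p : ZFSet.{0}} (hz : z ∈ M) (hp : p ∈ M) : z ∩ p ∈ M := by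
  obtain ⟨hMN, helem⟩ := hM
  obtain ⟨w, hwM⟩ : ∃ w : M, ∀ s : M,
      (s : ZFSet) ∈ (w : ZFSet) ↔ (s : ZFSet) ∈ z ∧ (s : ZFSet) ∈ p := by
    have hN : realizeIn N existsInterFormula
        (fun i => Set.inclusion hMN ((![⟨z, hz⟩, ⟨p, hp⟩] : Fin 2 → M) i)) := by
      rw [realizeIn_existsInterFormula]
      exact ⟨⟨z ∩ p, hN_inter _ (hMN hz) _ (hMN hp)⟩, fun s => ZFSet.mem_inter⟩
    simpa [realizeIn_existsInterFormula] using (helem 2 _ _).1 hN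
  have hwN : ∀ s : N, (s : ZFSet) ∈ (w : ZFSet) ↔ (s : ZFSet) ∈ z ∧ (s : ZFSet) ∈ p := by
    have := (helem 3 isInterFormula ![⟨z, hz⟩, ⟨p, hp⟩, w]).2
      (by simpa [realizeIn_isInterFormula] using hwM)
    simpa [realizeIn_isInterFormula] using this
  -- `N` is transitive, so agreeing on `N` means agreeing everywhere
  convert w.2 using 1
  ext s
  rw [ZFSet.mem_inter]
  exact ⟨fun hs => (hwN ⟨s, hN_trans z (hMN hz) s hs.1⟩).2 hs,
    fun hs => (hwN ⟨s, hN_trans w (hMN w.2) s hs⟩).1 hs⟩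

section HSet

variable {θ : Cardinal.{1}} {x y : ZFSet.{0}}

lemma transGen_mem_mono (hxy : x ⊆ y) {w : ZFSet.{0}} (hw : Relation.TransGen (· ∈ ·) w x) :
    Relation.TransGen (· ∈ ·) w y := by
  obtain ⟨v, hwv, hvx⟩ := Relation.TransGen.tail'_iff.mp hw
  exact Relation.TransGen.tail' hwv (hxy hvx)

lemma mem_HSet_of_subset (hxy : x ⊆ y) (hy : y ∈ HSet θ) : x ∈ HSet θ :=
  (Cardinal.mk_le_mk_of_subset fun _ => transGen_mem_mono hxy).trans_lt hy

lemma mem_HSet_of_mem (hx : x ∈ HSet θ) (hyx : y ∈ x) : y ∈ HSet θ :=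
  (Cardinal.mk_le_mk_of_subset (s := { w | Relation.TransGen (· ∈ ·) w y })
    fun _ hw => Relation.TransGen.tail hw hyx).trans_lt hx

lemma inter_mem_HSet (hx : x ∈ HSet θ) (y : ZFSet.{0}) : x ∩ y ∈ HSet θ :=
  mem_HSet_of_subset (fun _ h => (ZFSet.mem_inter.1 h).1) hx

lemma ZFSet.IsTransitive.mem_HSet (hx : x.IsTransitive) (hcard : #x.toSet < θ) :
    x ∈ HSet θ := by
  have htc : { w | Relation.TransGen (· ∈ ·) w x } = x.toSet := by
    ext w
    refine ⟨fun hw => ?_, fun hw => Relation.TransGen.single hw⟩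
    induction hw using Relation.TransGen.head_induction_on with
    | single h => exact h
    | head h _ ih => exact hx.mem_trans h ih
  exact (congrArg (fun s : Set ZFSet.{0} => #s) htc).trans_lt hcard

end HSet

section Club

variable {μ : Cardinal.{1}} {X F : Set ZFSet.{0}}

lemma mk_biUnion_Iio_lt {δ : Ordinal.{1}} (hμ : μ.IsRegular) (hδ : δ.card < μ)
    {f : Ordinal.{1} → Set ZFSet.{0}} (hf : ∀ i < δ, #(f i) < μ) :
    #↥(⋃ i ∈ Set.Iio δ, f i) < μ := by
  have himage : #↥(f '' Set.Iio δ) ≤ δ.card := by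
    have := Cardinal.mk_image_le_lift (f := f) (s := Set.Iio δ)
    rwa [Cardinal.mk_Iio_ordinal, Cardinal.lift_lift, Cardinal.lift_le] at this
  rw [← Set.sUnion_image, Set.sUnion_eq_biUnion,
    Cardinal.card_biUnion_lt_iff_forall_of_isRegular hμ (himage.trans_lt hδ)]
  rintro _ ⟨i, hi, rfl⟩
  exact hf i hi

lemma isClubIn_setOf_superset (hμ : μ.IsRegular) (hFX : F ⊆ X) (hF : #F < μ) :
    IsClubIn μ X {Y | Y ∈ smallSubsets μ X ∧ F ⊆ Y} := by
  refine ⟨fun Y hY => hY.1, fun a ha => ?_, fun δ hδ hδμ f hf _ => ?_⟩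
  · refine ⟨a ∪ F, ⟨⟨Set.union_subset ha.1 hFX, ?_⟩, Set.subset_union_right⟩,
      Set.subset_union_left⟩
    exact (Cardinal.mk_union_le _ _).trans_lt (Cardinal.add_lt_of_lt hμ.aleph0_le ha.2 hF)
  · refine ⟨⟨Set.iUnion₂_subset fun i hi => (hf i hi).1.1,
      mk_biUnion_Iio_lt hμ hδμ fun i hi => (hf i hi).1.2⟩, ?_⟩
    exact (hf 0 hδ).2.trans (Set.subset_biUnion_of_mem (u := f) (Set.mem_Iio.2 hδ))

lemma IsStationaryIn.exists_superset {S : Set (Set ZFSet.{0})} (hS : IsStationaryIn μ X S)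
    (hμ : μ.IsRegular) (hFX : F ⊆ X) (hF : #F < μ) : ∃ M ∈ S, F ⊆ M := by
  obtain ⟨M, hMS, -, hFM⟩ := hS.2 _ (isClubIn_setOf_superset hμ hFX hF)
  exact ⟨M, hMS, hFM⟩

end Club

namespace ZFTree

variable {T : ZFTree} {s t u : ZFSet.{0}}

lemma mem_nodes_of_lt_left (h : T.Lt s t) : s ∈ T.nodes := by
  obtain ⟨a, ha, b, -, he⟩ := T.rel_sub _ h
  rwa [(ZFSet.pair_injective he).1]

lemma mem_nodes_of_lt_right (h : T.Lt s t) : t ∈ T.nodes := by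
  obtain ⟨a, -, b, hb, he⟩ := T.rel_sub _ h
  rwa [(ZFSet.pair_injective he).2]

abbrev PredOrder (T : ZFTree) (t : ZFSet.{0}) : {s : ZFSet.{0} // T.Lt s t} →
    {s : ZFSet.{0} // T.Lt s t} → Prop :=
  fun a b => T.Lt a.1 b.1

lemma isWellOrder_predOrder (ht : t ∈ T.nodes) : IsWellOrder _ (T.PredOrder t) :=
  T.pred_wellOrder t ht

lemma nodeHeight_eq_type (ht : t ∈ T.nodes) :
    T.nodeHeight t = @Ordinal.type _ (T.PredOrder t) (isWellOrder_predOrder ht) := by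
  rw [nodeHeight, dif_pos (isWellOrder_predOrder ht)]

def predPrincipalSeg (hst : T.Lt s t) : @PrincipalSeg _ _ (T.PredOrder s) (T.PredOrder t) where
  toFun u := ⟨u.1, T.lt_trans _ _ _ u.2 hst⟩
  inj' _ _ he := Subtype.ext (congrArg Subtype.val he :)
  map_rel_iff' := Iff.rfl
  top := ⟨s, hst⟩
  mem_range_iff_rel' := by
    rintro ⟨u, hu⟩
    refine ⟨?_, fun h => ⟨⟨u, h⟩, rfl⟩⟩
    rintro ⟨⟨v, hvs⟩, he⟩
    cases congrArg Subtype.val he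
    exact hvs

lemma nodeHeight_eq_typein (hst : T.Lt s t) :
    T.nodeHeight s = @Ordinal.typein _ (T.PredOrder t)
      (isWellOrder_predOrder (mem_nodes_of_lt_right hst)) ⟨s, hst⟩ := by
  have := isWellOrder_predOrder (mem_nodes_of_lt_right hst)
  have := isWellOrder_predOrder (mem_nodes_of_lt_left hst)
  rw [nodeHeight_eq_type (mem_nodes_of_lt_left hst), ← Ordinal.typein_top (predPrincipalSeg hst)]
  rfl

lemma nodeHeight_lt_of_lt (hst : T.Lt s t) : T.nodeHeight s < T.nodeHeight t := by
  have := isWellOrder_predOrder (mem_nodes_of_lt_right hst)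
  rw [nodeHeight_eq_typein hst, nodeHeight_eq_type (mem_nodes_of_lt_right hst)]
  exact Ordinal.typein_lt_type _ _

lemma eq_of_lt_of_nodeHeight_eq (hut : T.Lt u t) (hst : T.Lt s t)
    (h : T.nodeHeight u = T.nodeHeight s) : u = s := by
  have := isWellOrder_predOrder (mem_nodes_of_lt_right hst)
  rw [nodeHeight_eq_typein hut, nodeHeight_eq_typein hst] at h
  exact congrArg Subtype.val (Ordinal.typein_injective _ h)

lemma exists_lt_nodeHeight_eq (ht : t ∈ T.nodes) {β : Ordinal.{1}} (hβ : β < T.nodeHeight t) :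
    ∃ s, T.Lt s t ∧ T.nodeHeight s = β := by
  have := isWellOrder_predOrder ht
  rw [nodeHeight_eq_type ht] at hβ
  obtain ⟨⟨s, hs⟩, hsβ⟩ := Ordinal.typein_surj _ hβ
  exact ⟨s, hs, (nodeHeight_eq_typein hs).trans hsβ⟩

lemma nodeHeight_lt_height (ht : t ∈ T.nodes) : T.nodeHeight t < T.height := by
  have hne : { α | T.level α = ∅ }.Nonempty := by
    refine ⟨Order.succ (⨆ u : T.nodes.toSet, T.nodeHeight u), Set.eq_empty_of_forall_notMem ?_⟩
    rintro u ⟨hu, hu_height⟩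
    have := le_ciSup (f := fun u : T.nodes.toSet => T.nodeHeight u) Ordinal.bddAbove_of_small
      ⟨u, hu⟩
    exact (Order.lt_succ _).not_ge (hu_height ▸ this)
  by_contra! hle
  obtain ⟨s, hs, hs_height⟩ : ∃ s ∈ T.nodes, T.nodeHeight s = T.height := by
    rcases hle.eq_or_lt with h | h
    · exact ⟨t, ht, h.symm⟩
    · obtain ⟨s, hst, hs⟩ := exists_lt_nodeHeight_eq ht h
      exact ⟨s, mem_nodes_of_lt_left hst, hs⟩
  exact (csInf_mem hne).subset ⟨hs, hs_height⟩

end ZFTree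

namespace ZFTree.IsCofinalBranch

variable {T : ZFTree} {B : Set ZFSet.{0}} {s t u : ZFSet.{0}}

lemma lt_of_nodeHeight_lt (hB : T.IsCofinalBranch B) (hs : s ∈ B) (ht : t ∈ B)
    (h : T.nodeHeight s < T.nodeHeight t) : T.Lt s t :=
  (hB.2.1 s hs t ht fun hst => h.ne (congrArg _ hst)).resolve_right
    fun hts => (nodeHeight_lt_of_lt hts).asymm h

lemma mem_of_lt (hB : T.IsCofinalBranch B) (ht : t ∈ B) (hut : T.Lt u t) : u ∈ B := by
  obtain ⟨s, hs, hs_height⟩ := hB.2.2 (T.nodeHeight u)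
    ((nodeHeight_lt_of_lt hut).trans (nodeHeight_lt_height (mem_nodes_of_lt_right hut)))
  have hst : T.Lt s t := hB.lt_of_nodeHeight_lt hs ht (hs_height ▸ nodeHeight_lt_of_lt hut)
  rwa [eq_of_lt_of_nodeHeight_eq hut hst hs_height.symm]

lemma mem_iff_lt (hB : T.IsCofinalBranch B) (ht : t ∈ B)
    (hu : T.nodeHeight u < T.nodeHeight t) : u ∈ B ↔ T.Lt u t :=
  ⟨fun huB => hB.lt_of_nodeHeight_lt huB ht hu, hB.mem_of_lt ht⟩

lemma exists_mem_forall_nodeHeight_lt (hB : T.IsCofinalBranch B) {X : Set ZFSet.{0}}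
    (hX : X ⊆ T.nodes.toSet) (hX_card : #X < T.height.cof) :
    ∃ t ∈ B, ∀ u ∈ X, T.nodeHeight u < T.nodeHeight t := by
  obtain ⟨t, htB, ht_height⟩ := hB.2.2 (⨆ u : X, T.nodeHeight u + 1)
    (Ordinal.iSup_add_one_lt_of_lt_cof hX_card fun u => nodeHeight_lt_height (hX u.2))
  refine ⟨t, htB, fun u hu => ?_⟩
  rw [ht_height, ← Order.add_one_le_iff]
  exact le_ciSup (f := fun u : X => T.nodeHeight u + 1) Ordinal.bddAbove_of_small ⟨u, hu⟩

end ZFTree.IsCofinalBranch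

universe u in
lemma Set.exists_bijOn_of_mk_eq {α β : Type u} [Nonempty β] {s : Set α} {t : Set β}
    (h : #s = #t) : ∃ f : α → β, Set.BijOn f s t := by
  classical
  obtain ⟨e⟩ := Cardinal.eq.1 h
  refine ⟨fun a => if ha : a ∈ s then e ⟨a, ha⟩ else Classical.arbitrary β, ?_, ?_, ?_⟩
  · intro a ha
    simp [ha]
  · intro a ha a' ha' he
    exact congrArg Subtype.val (e.injective (Subtype.ext (by simpa [ha, ha'] using he)))
  · intro b hb
    exact ⟨e.symm ⟨b, hb⟩, (e.symm ⟨b, hb⟩).2, by simp⟩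

namespace ZFSet

lemma exists_isTransitive_bijOn (N : ZFSet.{0}) :
    ∃ (A : ZFSet.{0}) (f : ZFSet.{0} → ZFSet.{0}),
      A.IsTransitive ∧ Set.BijOn f A.toSet N.toSet := by
  have hcard : #(N.card.ord.toZFSet.toSet) = #N.toSet := by
    change #(N.card.ord.toZFSet) = #N
    rw [cardinalMk_coe_sort, cardinalMk_coe_sort, Ordinal.card_toZFSet, Cardinal.card_ord]
  obtain ⟨f, hf⟩ := Set.exists_bijOn_of_mk_eq hcard
  exact ⟨_, f, (isOrdinal_toZFSet _).isTransitive, hf⟩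

/-- The code in `A` of a set `S`, where `f` decodes the elements of `A`. -/
def preimageIn (A : ZFSet.{0}) (f : ZFSet.{0} → ZFSet.{0}) (S : Set ZFSet.{0}) : ZFSet.{0} :=
  ZFSet.sep (fun a => f a ∈ S) A

variable {A : ZFSet.{0}} {f : ZFSet.{0} → ZFSet.{0}} {S : Set ZFSet.{0}}

@[simp] lemma mem_preimageIn {a : ZFSet.{0}} : a ∈ A.preimageIn f S ↔ a ∈ A ∧ f a ∈ S :=
  mem_sep

lemma preimageIn_subset : A.preimageIn f S ⊆ A := fun _ ha => (mem_preimageIn.1 ha).1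

lemma toSet_preimageIn : (A.preimageIn f S).toSet = A.toSet ∩ f ⁻¹' S :=
  Set.ext fun _ => mem_preimageIn

lemma preimageIn_injOn {N : Set ZFSet.{0}} (hf : Set.SurjOn f A.toSet N) :
    Set.InjOn (A.preimageIn f) {S | S ⊆ N} := by
  intro S hS S' hS' h
  have himage := congrArg (fun x => f '' x.toSet) h
  simp only [toSet_preimageIn, Set.image_inter_preimage] at himage
  rwa [Set.inter_eq_right.2 (hS.trans hf), Set.inter_eq_right.2 (hS'.trans hf)]
    at himage

end ZFSet

section Guessing

variable {κ θ : Cardinal.{1}} {M : Set ZFSet.{0}} {T : ZFTree} {A : ZFSet.{0}}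
  {f : ZFSet.{0} → ZFSet.{0}}

/-- The code of a cofinal branch is approximated because, below any `κ`-sized piece of `M`,
it agrees with the code of the predecessor set of a single node of the branch. -/
lemma isApproximated_preimageIn_of_isCofinalBranch (hM : IsElemSubmodel M (HSet θ))
    (hcof : κ < T.height.cof) (hf : Set.MapsTo f A.toSet T.nodes.toSet)
    (hpred : ∀ t ∈ T.nodes, A.preimageIn f {s | T.Lt s t} ∈ M) {B : Set ZFSet.{0}}
    (hB : T.IsCofinalBranch B) : IsApproximated κ M (A.preimageIn f B) := by
  intro z hzM _ hz_card
  obtain ⟨t, htB, ht⟩ := hB.exists_mem_forall_nodeHeight_lt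
    (X := f '' (A.toSet ∩ z.toSet)) (Set.image_subset_iff.2 fun _ ha => hf ha.1)
    ((Cardinal.mk_image_le.trans (Cardinal.mk_le_mk_of_subset Set.inter_subset_right)).trans
      hz_card |>.trans_lt hcof)
  have hcode : A.preimageIn f B ∩ z = z ∩ A.preimageIn f {s | T.Lt s t} := by
    ext a
    simp only [ZFSet.mem_inter, ZFSet.mem_preimageIn, Set.mem_ofPred_eq]
    constructor
    · rintro ⟨⟨haA, haB⟩, haz⟩
      exact ⟨haz, haA, (hB.mem_iff_lt htB (ht _ ⟨a, ⟨haA, haz⟩, rfl⟩)).1 haB⟩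
    · rintro ⟨haz, haA, hat⟩
      exact ⟨⟨haA, (hB.mem_iff_lt htB (ht _ ⟨a, ⟨haA, haz⟩, rfl⟩)).2 hat⟩, haz⟩
  rw [hcode]
  exact hM.inter_mem (fun _ hx _ hy => mem_HSet_of_mem hx hy)
    (fun _ hx y _ => inter_mem_HSet hx y) hzM (hpred t (hB.1 htB))

lemma mk_setOf_isGuessed_le {D : Set ZFSet.{0}} (hD : D ⊆ M) :
    #{d : ZFSet.{0} | d.toSet ⊆ D ∧ IsGuessed M d} ≤ #M := by
  choose e heM he using fun d : {d : ZFSet.{0} | d.toSet ⊆ D ∧ IsGuessed M d} => d.2.2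
  refine Cardinal.mk_le_of_injective (f := fun d => ⟨e d, heM d⟩) fun d d' hdd' => ?_
  have hd : ∀ d : {d : ZFSet.{0} | d.toSet ⊆ D ∧ IsGuessed M d},
      (e d).toSet ∩ M = d.1.toSet :=
    fun d => (he d).trans (Set.inter_eq_left.2 (d.2.1.trans hD))
  exact Subtype.ext (SetLike.coe_injective ((hd d).symm.trans
    ((congrArg (fun x : M => x.1.toSet ∩ M) hdd').trans (hd d'))))

lemma IsGuessingModel.mk_setOf_isCofinalBranch_le (hM : IsGuessingModel κ θ M)
    (hcof : κ < T.height.cof) (hA : A ∈ M) (hA_sub : A.toSet ⊆ M)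
    (hf_maps : Set.MapsTo f A.toSet T.nodes.toSet)
    (hf_surj : Set.SurjOn f A.toSet T.nodes.toSet)
    (hpred : ∀ t ∈ T.nodes, A.preimageIn f {s | T.Lt s t} ∈ M) :
    #{b : ZFSet.{0} | T.IsCofinalBranch b.toSet} ≤ #M := by
  have hcode : ∀ b : {b : ZFSet.{0} | T.IsCofinalBranch b.toSet},
      (A.preimageIn f b.1.toSet).toSet ⊆ A.toSet ∧ IsGuessed M (A.preimageIn f b.1.toSet) :=
    fun b => ⟨ZFSet.preimageIn_subset, hM.guess A hA _ ZFSet.preimageIn_subset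
      (isApproximated_preimageIn_of_isCofinalBranch hM.elem hcof hf_maps hpred b.2)⟩
  refine (Cardinal.mk_le_of_injective (f := fun b => ⟨_, hcode b⟩) fun b b' hbb' => ?_).trans
    (mk_setOf_isGuessed_le hA_sub)
  exact Subtype.ext (SetLike.coe_injective
    (ZFSet.preimageIn_injOn hf_surj b.2.1 b'.2.1 (congrArg Subtype.val hbb')))

end Guessing

theorem GMP_implies_no_weakKurepa_general (κ : Cardinal.{1}) (hreg : κ.IsRegular)
    (hgmp : GMP κ (Order.succ (Order.succ κ))) :
    ∀ T : ZFTree, T.height = (Order.succ κ).ord → #↥T.nodes.toSet = Order.succ κ →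
      #{ b : ZFSet.{0} | T.IsCofinalBranch b.toSet } ≤ Order.succ κ := by
  intro T hT hT_card
  set μ := Order.succ (Order.succ κ)
  have hκ : ℵ₀ ≤ κ := hreg.aleph0_le
  have hμ : μ.IsRegular := Cardinal.isRegular_succ (hκ.trans (Order.le_succ κ))
  have hcof : κ < T.height.cof := by
    rw [hT, (Cardinal.isRegular_succ hκ).cof_ord]
    exact Order.lt_succ κ
  obtain ⟨A, f, hA_trans, hf⟩ := T.nodes.exists_isTransitive_bijOn
  have hA_card : #A.toSet < μ := by
    rw [Cardinal.mk_congr (hf.equiv f), hT_card]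
    exact Order.lt_succ _
  have hA_H : A ∈ HSet μ := hA_trans.mem_HSet hA_card
  set F := insert A (A.toSet ∪ (fun t => A.preimageIn f {s | T.Lt s t}) '' T.nodes.toSet)
  have hF_H : F ⊆ HSet μ := by
    rintro x (rfl | hx | ⟨t, -, rfl⟩)
    · exact hA_H
    · exact mem_HSet_of_mem hA_H hx
    · exact mem_HSet_of_subset ZFSet.preimageIn_subset hA_H
  have hF_card : #F < μ := by
    have hcodes : #((fun t => A.preimageIn f {s | T.Lt s t}) '' T.nodes.toSet) < μ :=
      Cardinal.mk_image_le.trans_lt (hT_card ▸ Order.lt_succ _)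
    exact Cardinal.mk_insert_le.trans_lt (Cardinal.add_lt_of_lt hμ.aleph0_le
      ((Cardinal.mk_union_le _ _).trans_lt (Cardinal.add_lt_of_lt hμ.aleph0_le hA_card hcodes))
      (Cardinal.one_lt_aleph0.trans_le hμ.aleph0_le))
  obtain ⟨M, ⟨-, hM⟩, hFM⟩ := hgmp.exists_superset hμ hF_H hF_card
  rw [← hM.card]
  exact hM.mk_setOf_isCofinalBranch_le hcof (hFM (Set.mem_insert _ _))
    (fun _ ha => hFM (Or.inr (Or.inl ha))) hf.mapsTo hf.surjOn
    fun t ht => hFM (Or.inr (Or.inr ⟨t, ht, rfl⟩))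

/-- Let `κ` be a regular cardinal with `κ^{<κ} = κ`.  If
`GMP_{κ⁺⁺}(κ⁺⁺)` holds, then the weak Kurepa Hypothesis `wKH(κ⁺)` fails:
every tree of height `κ⁺` and cardinality `κ⁺` has at most `κ⁺` many cofinal
branches. -/
theorem GMP_implies_no_weakKurepa (κ : Cardinal.{1}) (hreg : κ.IsRegular)
    (hpow : κ ^< κ = κ)
    (hgmp : GMP κ (Order.succ (Order.succ κ))) :
    ∀ T : ZFTree, T.height = (Order.succ κ).ord → #↥T.nodes.toSet = Order.succ κ →
      #{ b : ZFSet.{0} | T.IsCofinalBranch b.toSet } ≤ Order.succ κ :=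
  GMP_implies_no_weakKurepa_general κ hreg hgmp
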